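/- arXiv:math/0301012 — 3 statements merged into one kernel-verified Lean document; each statement's English description precedes it below -/
import Mathlib

section
/- Let E be a finite set partitioned as E = O ⊔ 𝓔, and let b : 𝔽₂^E → 𝔽₂^E be a linear map (identified with a support function b : E → Finset E) satisfying: (1) b is symmetric (y ∈ b(x) ↔ x ∈ b(y)); (2) x ∈ b(x) ↔ x ∈ O; (3) b(x) ≠ b(y) whenever x ∈ 𝓔 and y ∈ O; (4) the image of b (as a linear map) has dimension 2; (5) O ≠ ∅. Then: for any x, y ∈ 𝓔 with b(x) ≠ ∅ and b(y) ≠ ∅, one has b(x) = b(y). -/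
private lemma zmod2_cases (a : ZMod 2) : a = 0 ∨ a = 1 := by
  revert a; decide

/-- In a 2-dimensional module over `ZMod 2`, three distinct nonzero vectors
satisfy `w = u + v`. -/
private lemma sum_of_three {V : Type*} [AddCommGroup V] [Module (ZMod 2) V]
    [FiniteDimensional (ZMod 2) V] (hdim : Module.finrank (ZMod 2) V = 2)
    (u v w : V) (hu : u ≠ 0) (hv : v ≠ 0) (hw : w ≠ 0)
    (huv : u ≠ v) (hwu : w ≠ u) (hwv : w ≠ v) : w = u + v := by
  have h2 : ∀ z : V, z + z = 0 := by
    intro z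
    have : (2 : ZMod 2) • z = z + z := two_smul _ z
    have h0 : (2 : ZMod 2) = 0 := by decide
    rw [h0, zero_smul] at this
    exact this.symm
  have hind : LinearIndependent (ZMod 2) ![u, v] := by
    rw [LinearIndependent.pair_iff]
    intro s t hst
    rcases zmod2_cases s with hs | hs <;> rcases zmod2_cases t with ht | ht <;>
      subst hs <;> subst ht <;> simp_all
    -- remaining case : u + v = 0
    exact huv (by rw [← add_zero u, ← h2 v, ← add_assoc, hst, zero_add])
  have hrange : Set.range ![u, v] = {u, v} := by
    simp [Matrix.range_cons, Matrix.range_empty, Set.pair_comm]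
  have hspan : Submodule.span (ZMod 2) {u, v} = ⊤ := by
    apply Submodule.eq_top_of_finrank_eq
    rw [← hrange, finrank_span_eq_card hind, hdim]
    simp
  have hwmem : w ∈ Submodule.span (ZMod 2) {u, v} := by rw [hspan]; trivial
  obtain ⟨a, c, hac⟩ := Submodule.mem_span_pair.mp hwmem
  rcases zmod2_cases a with ha | ha <;> rcases zmod2_cases c with hc | hc <;>
    subst ha <;> subst hc <;> simp_all

/-- For a symmetric linear map `b` on `𝔽₂^E` with `x ∈ b(x) ↔ x ∈ O`,
values on `𝓔` separated from values on `O`, image of dimension 2 and `O ≠ ∅`,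
any two nonempty values of `b` on elements of `𝓔` coincide. -/
theorem even_nonzero_values_equal
    {E : Type*} [Fintype E] [DecidableEq E]
    (O 𝓔 : Finset E) (hpart : O ∪ 𝓔 = Finset.univ) (hdisj : Disjoint O 𝓔)
    (b : (E → ZMod 2) →ₗ[ZMod 2] (E → ZMod 2))
    (B : E → Finset E)
    (hB : ∀ x y : E, y ∈ B x ↔ b (Pi.single x 1) y = 1)
    (hsym : ∀ x y : E, y ∈ B x ↔ x ∈ B y)
    (hself : ∀ x : E, x ∈ B x ↔ x ∈ O)
    (hsep : ∀ x ∈ 𝓔, ∀ y ∈ O, B x ≠ B y)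
    (hdim : Module.finrank (ZMod 2) (LinearMap.range b) = 2)
    (hO : O.Nonempty) :
    ∀ x ∈ 𝓔, ∀ y ∈ 𝓔, B x ≠ ∅ → B y ≠ ∅ → B x = B y := by
  intro x hx y hy hBx hBy
  by_contra hne
  set f : E → (E → ZMod 2) := fun e => b (Pi.single e 1) with hf
  have hmem : ∀ a c : E, c ∈ B a ↔ f a c = 1 := hB
  have hval0 : ∀ a c : E, c ∉ B a → f a c = 0 := by
    intro a c h
    rcases zmod2_cases (f a c) with h0 | h1
    · exact h0
    · exact absurd ((hmem a c).mpr h1) h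
  have hfe : ∀ a c : E, f a = f c → B a = B c := by
    intro a c h; ext e; rw [hmem, hmem, h]
  have hne0 : ∀ a : E, B a ≠ ∅ → f a ≠ 0 := by
    intro a h h0
    apply h
    rw [Finset.eq_empty_iff_forall_notMem]
    intro e he
    rw [hmem, h0] at he
    simp at he
  obtain ⟨o, ho⟩ := hO
  have hoBo : o ∈ B o := (hself o).mpr ho
  have hfo0 : f o ≠ 0 := hne0 o (fun h => by rw [h] at hoBo; exact absurd hoBo (Finset.notMem_empty o))
  have hfx0 : f x ≠ 0 := hne0 x hBx
  have hfy0 : f y ≠ 0 := hne0 y hBy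
  have hxy : f x ≠ f y := fun h => hne (hfe x y h)
  have hox : f o ≠ f x := fun h => hsep x hx o ho (hfe x o h.symm)
  have hoy : f o ≠ f y := fun h => hsep y hy o ho (hfe y o h.symm)
  -- package into the range submodule
  have mx : f x ∈ LinearMap.range b := ⟨Pi.single x 1, rfl⟩
  have my : f y ∈ LinearMap.range b := ⟨Pi.single y 1, rfl⟩
  have mo : f o ∈ LinearMap.range b := ⟨Pi.single o 1, rfl⟩
  have key : (⟨f o, mo⟩ : LinearMap.range b) = ⟨f x, mx⟩ + ⟨f y, my⟩ := by
    apply sum_of_three hdim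
    · exact fun h => hfx0 (by simpa using Subtype.ext_iff.mp h)
    · exact fun h => hfy0 (by simpa using Subtype.ext_iff.mp h)
    · exact fun h => hfo0 (by simpa using Subtype.ext_iff.mp h)
    · exact fun h => hxy (by simpa using Subtype.ext_iff.mp h)
    · exact fun h => hox (by simpa using Subtype.ext_iff.mp h)
    · exact fun h => hoy (by simpa using Subtype.ext_iff.mp h)
  have heq : ∀ e : E, f o e = f x e + f y e := by
    intro e
    have : f o = f x + f y := by simpa using Subtype.ext_iff.mp key
    rw [this]; rfl
  -- coordinate chase
  have hdiag : ∀ a : E, a ∈ 𝓔 → f a a = 0 := by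
    intro a ha
    exact hval0 a a (fun h => Finset.disjoint_left.mp hdisj ((hself a).mp h) ha)
  have hoo : f o o = 1 := (hmem o o).mp hoBo
  have aux : ∀ a c : E, a ∈ 𝓔 → c ∈ 𝓔 → (∀ e : E, f o e = f a e + f c e) →
      f a o = 1 → f c o = 1 := by
    intro a c ha hc heq' hao
    have haBo : a ∈ B o := (hsym a o).mp ((hmem a o).mpr hao)
    have hoa : f o a = 1 := (hmem o a).mp haBo
    have hca : f c a = 1 := by
      have := heq' a
      rw [hoa, hdiag a ha, zero_add] at this
      exact this.symm
    have hac : f a c = 1 := (hmem a c).mp ((hsym c a).mp ((hmem c a).mpr hca))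
    have hoc : f o c = 1 := by
      have := heq' c
      rw [hac, hdiag c hc, add_zero] at this
      exact this
    exact (hmem c o).mp ((hsym o c).mp ((hmem o c).mpr hoc))
  have heq' : ∀ e : E, f o e = f y e + f x e := by
    intro e; rw [heq e, add_comm]
  have hsum : f x o + f y o = 1 := by rw [← heq o, hoo]
  have hone : f x o = 1 ∨ f y o = 1 := by
    rcases zmod2_cases (f x o) with h1 | h1
    · rcases zmod2_cases (f y o) with h2 | h2
      · rw [h1, h2] at hsum; exact absurd hsum (by decide)
      · exact Or.inr h2
    · exact Or.inl h1
  have hboth : f x o = 1 ∧ f y o = 1 := by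
    rcases hone with h | h
    · exact ⟨h, aux x y hx hy heq h⟩
    · exact ⟨aux y x hy hx heq' h, h⟩
  rw [hboth.1, hboth.2] at hsum
  exact absurd hsum (by decide)
end

section
/- With the same hypotheses as the previous statement (b symmetric, x ∈ b(x) ↔ x ∈ O, b(x) ≠ b(y) for x ∈ 𝓔 and y ∈ O, dim Im(b) = 2, O ≠ ∅, and additionally the conclusion that all nonzero values of b on 𝓔 coincide): if x ∈ 𝓔 and b(x) ≠ ∅, then b(x) = O (the support of b(x) is exactly the set O). -/
/-- With the hypotheses of the previous statement, together with the fact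
that all nonzero values of `b` on `𝓔` coincide: if `x ∈ 𝓔` and `b(x) ≠ ∅`,
then `b(x) = O`. -/
theorem even_nonzero_value_is_odd_set
    {E : Type*} [Fintype E] [DecidableEq E]
    (O 𝓔 : Finset E) (hpart : O ∪ 𝓔 = Finset.univ) (hdisj : Disjoint O 𝓔)
    (b : (E → ZMod 2) →ₗ[ZMod 2] (E → ZMod 2))
    (B : E → Finset E)
    (hB : ∀ x y : E, y ∈ B x ↔ b (Pi.single x 1) y = 1)
    (hsym : ∀ x y : E, y ∈ B x ↔ x ∈ B y)
    (hself : ∀ x : E, x ∈ B x ↔ x ∈ O)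
    (hsep : ∀ x ∈ 𝓔, ∀ y ∈ O, B x ≠ B y)
    (hdim : Module.finrank (ZMod 2) (LinearMap.range b) = 2)
    (hO : O.Nonempty)
    (heq : ∀ x ∈ 𝓔, ∀ y ∈ 𝓔, B x ≠ ∅ → B y ≠ ∅ → B x = B y) :
    ∀ x ∈ 𝓔, B x ≠ ∅ → B x = O := by
  intro x hx hne
  -- B z is determined by b (single z 1)
  have hBdet : ∀ z z' : E, b (Pi.single z 1) = b (Pi.single z' 1) → B z = B z' := by
    intro z z' h
    ext y
    rw [hB, hB, h]
  -- Step A: B x ⊆ O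
  have hsubO : B x ⊆ O := by
    intro y hy
    by_contra hyO
    have hyE : y ∈ 𝓔 := by
      have : y ∈ O ∪ 𝓔 := by rw [hpart]; exact Finset.mem_univ y
      rcases Finset.mem_union.mp this with h | h
      · exact absurd h hyO
      · exact h
    have hxy : x ∈ B y := (hsym x y).mp hy
    have hBy : B y ≠ ∅ := by
      intro h; rw [h] at hxy; exact absurd hxy (Finset.notMem_empty x)
    have hxy' : y ∈ B y := (heq x hx y hyE hne hBy) ▸ hy
    exact hyO ((hself y).mp hxy')
  -- notation
  set v := b (Pi.single x 1) with hv
  have hxO : x ∉ O := fun h => (Finset.disjoint_left.mp hdisj h) hx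
  -- helper: ZMod 2 values
  have hz2 : ∀ a : ZMod 2, a = 0 ∨ a = 1 := by decide
  have hnotmem : ∀ z y : E, y ∉ B z → b (Pi.single z 1) y = 0 := by
    intro z y h
    rcases hz2 (b (Pi.single z 1) y) with h0 | h1
    · exact h0
    · exact absurd ((hB z y).mpr h1) h
  -- Step B: O ⊆ B x
  have hsupO : O ⊆ B x := by
    intro o hoO
    by_contra hoB
    obtain ⟨o', ho'⟩ := Finset.nonempty_iff_ne_empty.mpr hne
    have ho'O : o' ∈ O := hsubO ho'
    set w := b (Pi.single o 1) with hw
    set w' := b (Pi.single o' 1) with hw'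
    -- coordinate facts
    have hvx : v x = 0 := hnotmem x x (fun h => hxO ((hself x).mp h))
    have hvo : v o = 0 := hnotmem x o hoB
    have hvo' : v o' = 1 := (hB x o').mp ho'
    have hwo : w o = 1 := (hB o o).mp ((hself o).mpr hoO)
    have hw'o' : w' o' = 1 := (hB o' o').mp ((hself o').mpr ho'O)
    have hwx : w x = 0 := hnotmem o x (fun h => hoB ((hsym x o).mpr h))
    have hw'x : w' x = 1 := (hB o' x).mp ((hsym x o').mp ho')
    have hsymoo' : w o' = w' o := by
      rcases hz2 (w o') with h0 | h1
      · rcases hz2 (w' o) with g0 | g1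
        · rw [h0, g0]
        · exfalso
          have h2 : o ∈ B o' := (hB o' o).mpr g1
          have h3 : o' ∈ B o := (hsym o o').mpr h2
          have h4 := (hB o o').mp h3
          rw [← hw] at h4
          rw [h4] at h0; exact one_ne_zero h0
      · have h2 : o' ∈ B o := (hB o o').mpr h1
        have h3 : o ∈ B o' := (hsym o o').mp h2
        have h4 := (hB o' o).mp h3
        rw [← hw'] at h4
        rw [h1, h4]
    -- distinctness
    have hv0 : v ≠ 0 := fun h => by rw [h] at hvo'; exact one_ne_zero hvo'.symm
    have hw0 : w ≠ 0 := fun h => by rw [h] at hwo; exact one_ne_zero hwo.symm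
    have hw'0 : w' ≠ 0 := fun h => by rw [h] at hw'o'; exact one_ne_zero hw'o'.symm
    have hvw : v ≠ w := fun h => hsep x hx o hoO (hBdet x o h)
    have hvw' : v ≠ w' := fun h => hsep x hx o' ho'O (hBdet x o' h)
    have hww' : w ≠ w' := fun h => by
      rw [← h] at hw'x; rw [hwx] at hw'x; exact one_ne_zero hw'x.symm
    -- key claim : w' = v + w, by cardinality of the 2-dimensional range
    have hkey : w' = v + w := by
      by_contra hne'
      have hvwne : v + w ≠ 0 := by
        intro h
        have h2 := congrFun h o
        rw [Pi.add_apply, hvo, hwo, Pi.zero_apply] at h2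
        exact absurd h2 (by decide)
      have hvwv : v + w ≠ v := by
        intro h
        have h2 := congrFun h o
        rw [Pi.add_apply, hvo, hwo] at h2
        exact absurd h2 (by decide)
      have hvww : v + w ≠ w := by
        intro h
        have h2 := congrFun h o'
        rw [Pi.add_apply, hvo'] at h2
        rcases hz2 (w o') with g | g <;> rw [g] at h2 <;> exact absurd h2 (by decide)
      -- five distinct elements of the range
      have m0 : (0 : E → ZMod 2) ∈ LinearMap.range b := ⟨0, map_zero b⟩
      have mv : v ∈ LinearMap.range b := ⟨_, rfl⟩
      have mw : w ∈ LinearMap.range b := ⟨_, rfl⟩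
      have mw' : w' ∈ LinearMap.range b := ⟨_, rfl⟩
      have mvw : v + w ∈ LinearMap.range b :=
        ⟨Pi.single x 1 + Pi.single o 1, by rw [map_add]⟩
      let S : Finset (LinearMap.range b) :=
        {⟨0, m0⟩, ⟨v, mv⟩, ⟨w, mw⟩, ⟨w', mw'⟩, ⟨v + w, mvw⟩}
      have hcard5 : S.card = 5 := by
        simp only [S]
        rw [Finset.card_insert_of_notMem, Finset.card_insert_of_notMem,
          Finset.card_insert_of_notMem, Finset.card_insert_of_notMem,
          Finset.card_singleton]
        · simp only [Finset.mem_singleton, Subtype.mk.injEq]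
          exact fun h => hne' h
        · simp only [Finset.mem_insert, Finset.mem_singleton, Subtype.mk.injEq]
          push_neg
          exact ⟨hww' , fun h => hvww h.symm⟩
        · simp only [Finset.mem_insert, Finset.mem_singleton, Subtype.mk.injEq]
          push_neg
          exact ⟨hvw, hvw', fun h => hvwv h.symm⟩
        · simp only [Finset.mem_insert, Finset.mem_singleton, Subtype.mk.injEq]
          push_neg
          exact ⟨fun h => hv0 h.symm, fun h => hw0 h.symm, fun h => hw'0 h.symm,
            fun h => hvwne h.symm⟩
      have hle : S.card ≤ Fintype.card (LinearMap.range b) := Finset.card_le_univ S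
      have hcard : Fintype.card (LinearMap.range b) = 4 := by
        have := Module.card_eq_pow_finrank (K := ZMod 2) (V := LinearMap.range b)
        rw [hdim] at this
        simpa [ZMod.card] using this
      rw [hcard5, hcard] at hle
      omega
    -- derive the contradiction from w' = v + w
    have e1 : w' o = v o + w o := by rw [hkey]; rfl
    rw [hvo, hwo, zero_add] at e1
    have e2 : w' o' = v o' + w o' := by rw [hkey]; rfl
    rw [hw'o', hvo', hsymoo', e1] at e2
    exact absurd e2 (by decide)
  -- conclude
  exact Finset.Subset.antisymm hsubO hsupO
end

section
/- Main Lemma (abstract form): Let E = O ⊔ 𝓔 be a finite set and b : 𝔽₂^E → 𝔽₂^E a linear map satisfying: symmetry (y ∈ b(x) ↔ x ∈ b(y)); x ∈ b(x) ↔ x ∈ O; b(x) ≠ b(y) for x ∈ 𝓔, y ∈ O; b(x) ∈ {∅, O} for every x ∈ 𝓔; dim(Im b) ≤ 2; and O ≠ ∅ when dim(Im b) ≥ 1. Then there exist partitions (O₀, O₁) of O and (𝓔₀, 𝓔₁) of 𝓔 such that b(x) = O₀ ∪ 𝓔₁ for x ∈ O₀, b(x) = O₁ ∪ 𝓔₁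 for x ∈ O₁, b(x) = ∅ for x ∈ 𝓔₀, and b(x) = O for x ∈ 𝓔₁. Moreover, if dim(Im b) = 2 then O₀ ≠ ∅ and at most one of O₁, 𝓔₁ is empty. -/
/-!
Write `v x = b (Pi.single x 1)`, so that `B x` is the support of `v x` and `Im b` is spanned by
the `v x`. A space of `𝔽₂`-dimension at most two has at most three nonzero vectors, so any three
pairwise distinct nonzero rows satisfy `v z = v x + v y`, i.e. `B z = B x ∆ B y`.

By symmetry, the `𝓔`-part of `B x` for `x ∈ O` is `𝓔₁ = {t ∈ 𝓔 | B t = O}`. The symmetric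
difference relation then shows that `y ∈ B x` forces `B x = B y` for `x, y ∈ O`, and that the rows
indexed by `O` take at most two values; these give the classes `O₀` and `O₁`. If `O₁` and `𝓔₁`
were both empty, every `v x` would lie in `{0, v x₀}` and `Im b` would have dimension at most one.
-/

open Module
open scoped symmDiff

theorem LinearMap.range_le_of_apply_single_mem {ι R M : Type*} [Finite ι] [DecidableEq ι]
    [Semiring R] [AddCommMonoid M] [Module R M] (f : (ι → R) →ₗ[R] M) {W : Submodule R M}
    (h : ∀ i, f (Pi.single i 1) ∈ W) : range f ≤ W := by
  rw [LinearMap.range_eq_map, ← (Pi.basisFun R ι).span_eq, Submodule.map_span, Submodule.span_le]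
  rintro _ ⟨_, ⟨i, rfl⟩, rfl⟩
  simpa using h i

theorem ZMod.eq_iff_eq_one_iff_eq_one {a c : ZMod 2} : a = c ↔ (a = 1 ↔ c = 1) := by
  revert a c; decide

theorem ZMod.eq_zero_iff_ne_one {a : ZMod 2} : a = 0 ↔ a ≠ 1 := by
  revert a; decide

theorem ZMod.add_eq_one_iff_xor {a c : ZMod 2} : a + c = 1 ↔ ¬(a = 1 ↔ c = 1) := by
  revert a c; decide

theorem eq_add_of_finrank_le_two {V : Type*} [AddCommGroup V] [Module (ZMod 2) V] [Finite V]
    (hV : finrank (ZMod 2) V ≤ 2) {p q r : V} (hp : p ≠ 0) (hq : q ≠ 0) (hr : r ≠ 0)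
    (hpq : p ≠ q) (hrp : r ≠ p) (hrq : r ≠ q) : r = p + q := by
  classical
  have := Fintype.ofFinite V
  have hcard : Fintype.card V ≤ 4 := by
    rw [Module.card_eq_pow_finrank (K := ZMod 2), ZMod.card]
    exact Nat.pow_le_pow_right two_pos hV
  have hneg : -q = q := by rw [← neg_one_smul (ZMod 2) q]; exact one_smul _ q
  have hpq0 : p + q ≠ 0 := fun h => hpq (hneg ▸ eq_neg_iff_add_eq_zero.2 h)
  have hp' : p ≠ p + q := by simpa using hq
  have hq' : q ≠ p + q := by simpa using hp
  by_contra hne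
  have h5 : ({0, p, q, p + q, r} : Finset V).card = 5 := by
    simp [Finset.card_insert_of_notMem, hp.symm, hq.symm, hr.symm, hpq0.symm, hp', hq', hpq,
      hrp.symm, hrq.symm, Ne.symm hne]
  have := Finset.card_le_univ ({0, p, q, p + q, r} : Finset V)
  omega

section

variable {E : Type*} [DecidableEq E] {b : (E → ZMod 2) →ₗ[ZMod 2] (E → ZMod 2)}
  {B : E → Finset E}

theorem apply_single_eq_iff (hB : ∀ x y, y ∈ B x ↔ b (Pi.single x 1) y = 1) {x y : E} :
    b (Pi.single x 1) = b (Pi.single y 1) ↔ B x = B y := by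
  simp only [funext_iff, Finset.ext_iff, hB]
  exact forall_congr' fun _ => ZMod.eq_iff_eq_one_iff_eq_one

theorem apply_single_eq_zero_iff (hB : ∀ x y, y ∈ B x ↔ b (Pi.single x 1) y = 1) {x : E} :
    b (Pi.single x 1) = 0 ↔ B x = ∅ := by
  simp only [funext_iff, Finset.eq_empty_iff_forall_notMem, hB, Pi.zero_apply,
    ZMod.eq_zero_iff_ne_one]

theorem eq_symmDiff_of_finrank_range_le_two [Fintype E]
    (hB : ∀ x y, y ∈ B x ↔ b (Pi.single x 1) y = 1)
    (hdim : finrank (ZMod 2) (LinearMap.range b) ≤ 2) (x y z : E) (hx : B x ≠ ∅) (hy : B y ≠ ∅)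
    (hz : B z ≠ ∅) (hxy : B x ≠ B y) (hzx : B z ≠ B x) (hzy : B z ≠ B y) : B z = B x ∆ B y := by
  have key := eq_add_of_finrank_le_two hdim (p := b.rangeRestrict (Pi.single x 1))
    (q := b.rangeRestrict (Pi.single y 1)) (r := b.rangeRestrict (Pi.single z 1))
  simp only [ne_eq, Subtype.ext_iff, LinearMap.codRestrict_apply, Submodule.coe_zero,
    Submodule.coe_add, apply_single_eq_iff hB, apply_single_eq_zero_iff hB] at key
  ext t
  rw [Finset.mem_symmDiff, hB, hB, hB, key hx hy hz hxy hzx hzy, Pi.add_apply,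
    ZMod.add_eq_one_iff_xor]
  tauto

theorem finrank_range_le_one_of_forall_eq_or_eq_empty [Fintype E]
    (hB : ∀ x y, y ∈ B x ↔ b (Pi.single x 1) y = 1) (x₀ : E)
    (h : ∀ x, B x = B x₀ ∨ B x = ∅) : finrank (ZMod 2) (LinearMap.range b) ≤ 1 := by
  calc finrank (ZMod 2) (LinearMap.range b) ≤ finrank (ZMod 2) (ZMod 2 ∙ b (Pi.single x₀ 1)) := by
        refine Submodule.finrank_mono (b.range_le_of_apply_single_mem fun x => ?_)
        rcases h x with hx | hx
        · rw [(apply_single_eq_iff hB).2 hx]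
          exact Submodule.mem_span_singleton_self _
        · rw [(apply_single_eq_zero_iff hB).2 hx]
          exact Submodule.zero_mem _
    _ ≤ 1 := (finrank_span_le_card _).trans (by simp)

end

section

variable {E : Type*} [DecidableEq E]

/-- The rows `B x` of a symmetric `𝔽₂`-matrix with diagonal `O`; `eq_symmDiff` is what remains
of `dim Im b ≤ 2`. -/
structure IsLacetForm (O 𝓔 : Finset E) (B : E → Finset E) : Prop where
  symm : ∀ x y, y ∈ B x ↔ x ∈ B y
  self_mem_iff : ∀ x, x ∈ B x ↔ x ∈ O
  mem_or_mem : ∀ x, x ∈ O ∨ x ∈ 𝓔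
  eq_empty_or_eq : ∀ x ∈ 𝓔, B x = ∅ ∨ B x = O
  eq_symmDiff : ∀ x y z, B x ≠ ∅ → B y ≠ ∅ → B z ≠ ∅ → B x ≠ B y → B z ≠ B x → B z ≠ B y →
    B z = B x ∆ B y

namespace IsLacetForm

variable {O 𝓔 : Finset E} {B : E → Finset E} {x y z t : E}

theorem ne_empty (h : IsLacetForm O 𝓔 B) (hx : x ∈ O) : B x ≠ ∅ :=
  Finset.ne_empty_of_mem ((h.self_mem_iff x).2 hx)

theorem mem_iff_of_mem_right (h : IsLacetForm O 𝓔 B) (hx : x ∈ O) (ht : t ∈ 𝓔) :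
    t ∈ B x ↔ B t = O := by
  rw [h.symm]
  rcases h.eq_empty_or_eq t ht with hBt | hBt <;> rw [hBt]
  · simpa using (Finset.ne_empty_of_mem hx).symm
  · simpa using hx

theorem mem_iff_mem_of_mem (h : IsLacetForm O 𝓔 B) (hx : x ∈ O) (hy : y ∈ O) (hz : z ∈ O)
    (hxy : y ∈ B x) : z ∈ B x ↔ z ∈ B y := by
  have hyx : x ∈ B y := (h.symm x y).1 hxy
  by_cases hBxy : B x = B y
  · rw [hBxy]
  by_cases hzx : B z = B x
  · exact iff_of_true ((h.symm x z).2 (hzx ▸ (h.self_mem_iff x).2 hx)) ((h.symm z y).1 (hzx ▸ hxy))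
  by_cases hzy : B z = B y
  · exact iff_of_true ((h.symm z x).1 (hzy ▸ hyx)) ((h.symm y z).2 (hzy ▸ (h.self_mem_iff y).2 hy))
  -- `x` and `y` both lie in `B x ∩ B y`, hence outside `B z = B x ∆ B y`.
  have hBz := h.eq_symmDiff x y z (h.ne_empty hx) (h.ne_empty hy) (h.ne_empty hz) hBxy hzx hzy
  have hxz : x ∉ B z := by simp [hBz, Finset.mem_symmDiff, (h.self_mem_iff x).2 hx, hyx]
  have hyz : y ∉ B z := by simp [hBz, Finset.mem_symmDiff, (h.self_mem_iff y).2 hy, hxy]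
  exact iff_of_false (fun h' => hxz ((h.symm x z).1 h')) (fun h' => hyz ((h.symm y z).1 h'))

theorem eq_of_mem (h : IsLacetForm O 𝓔 B) (hx : x ∈ O) (hy : y ∈ O) (hxy : y ∈ B x) :
    B x = B y := by
  ext t
  rcases h.mem_or_mem t with ht | ht
  · exact h.mem_iff_mem_of_mem hx hy ht hxy
  · rw [h.mem_iff_of_mem_right hx ht, h.mem_iff_of_mem_right hy ht]

theorem eq_of_ne_of_ne (h : IsLacetForm O 𝓔 B) (hx : x ∈ O) (hy : y ∈ O) (hz : z ∈ O)
    (hyx : B y ≠ B x) (hzx : B z ≠ B x) : B y = B z := by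
  by_contra hyz
  have hBz := h.eq_symmDiff x y z (h.ne_empty hx) (h.ne_empty hy) (h.ne_empty hz) hyx.symm hzx
    (Ne.symm hyz)
  have hzz := (h.self_mem_iff z).2 hz
  rw [hBz, Finset.mem_symmDiff] at hzz
  rcases hzz with ⟨hzx', -⟩ | ⟨hzy', -⟩
  · exact hzx (h.eq_of_mem hx hz hzx').symm
  · exact hyz (h.eq_of_mem hy hz hzy')

theorem eq_filter_union_filter (h : IsLacetForm O 𝓔 B) (hx : x ∈ O) :
    B x = O.filter (B · = B x) ∪ 𝓔.filter (B · = O) := by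
  ext t
  simp only [Finset.mem_union, Finset.mem_filter]
  constructor
  · intro htx
    rcases h.mem_or_mem t with ht | ht
    · exact Or.inl ⟨ht, (h.eq_of_mem hx ht htx).symm⟩
    · exact Or.inr ⟨ht, (h.mem_iff_of_mem_right hx ht).1 htx⟩
  · rintro (⟨ht, hBt⟩ | ⟨ht, hBt⟩)
    · exact hBt ▸ (h.self_mem_iff t).2 ht
    · exact (h.mem_iff_of_mem_right hx ht).2 hBt

theorem eq_filter_ne_union_filter (h : IsLacetForm O 𝓔 B) (hy : y ∈ O) (hx : x ∈ O)
    (hxy : B x ≠ B y) : B x = O.filter (B · ≠ B y) ∪ 𝓔.filter (B · = O) := by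
  rw [h.eq_filter_union_filter hx, Finset.filter_congr fun t ht =>
    ⟨fun htx => htx ▸ hxy, fun hty => h.eq_of_ne_of_ne hy ht hx hty hxy⟩]

theorem eq_or_eq_empty (h : IsLacetForm O 𝓔 B) (hO₁ : O.filter (B · ≠ B y) = ∅)
    (h𝓔₁ : 𝓔.filter (B · = O) = ∅) (x : E) : B x = B y ∨ B x = ∅ := by
  rw [Finset.filter_eq_empty_iff] at hO₁ h𝓔₁
  rcases h.mem_or_mem x with hx | hx
  · exact Or.inl (not_not.1 (hO₁ hx))
  · exact Or.inr ((h.eq_empty_or_eq x hx).resolve_right (h𝓔₁ hx))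

end IsLacetForm

end

theorem main_lemma_general
    {E : Type*} [Fintype E] [DecidableEq E]
    (O 𝓔 : Finset E) (hpart : O ∪ 𝓔 = Finset.univ)
    (b : (E → ZMod 2) →ₗ[ZMod 2] (E → ZMod 2))
    (B : E → Finset E)
    (hB : ∀ x y : E, y ∈ B x ↔ b (Pi.single x 1) y = 1)
    (hsym : ∀ x y : E, y ∈ B x ↔ x ∈ B y)
    (hself : ∀ x : E, x ∈ B x ↔ x ∈ O)
    (hE : ∀ x ∈ 𝓔, B x = ∅ ∨ B x = O)
    (hdim : Module.finrank (ZMod 2) (LinearMap.range b) ≤ 2)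
    (hO : 1 ≤ Module.finrank (ZMod 2) (LinearMap.range b) → O.Nonempty) :
    ∃ O₀ O₁ 𝓔₀ 𝓔₁ : Finset E,
      O₀ ∪ O₁ = O ∧ Disjoint O₀ O₁ ∧
      𝓔₀ ∪ 𝓔₁ = 𝓔 ∧ Disjoint 𝓔₀ 𝓔₁ ∧
      (∀ x ∈ O₀, B x = O₀ ∪ 𝓔₁) ∧
      (∀ x ∈ O₁, B x = O₁ ∪ 𝓔₁) ∧
      (∀ x ∈ 𝓔₀, B x = ∅) ∧
      (∀ x ∈ 𝓔₁, B x = O) ∧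
      (Module.finrank (ZMod 2) (LinearMap.range b) = 2 →
        O₀.Nonempty ∧ ¬(O₁ = ∅ ∧ 𝓔₁ = ∅)) := by
  have h : IsLacetForm O 𝓔 B :=
    ⟨hsym, hself, fun x => Finset.mem_union.1 (hpart ▸ Finset.mem_univ x), hE,
      eq_symmDiff_of_finrank_range_le_two hB hdim⟩
  rcases O.eq_empty_or_nonempty with rfl | ⟨x₀, hx₀⟩
  · refine ⟨∅, ∅, 𝓔, ∅, by simp, by simp, by simp, by simp, by simp, by simp,
      fun x hx => (hE x hx).elim id id, by simp, fun hrank => ?_⟩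
    simpa using hO (by omega)
  refine ⟨O.filter (B · = B x₀), O.filter (B · ≠ B x₀), 𝓔.filter (B · ≠ O), 𝓔.filter (B · = O),
    Finset.filter_union_filter_not_eq _ _, Finset.disjoint_filter_filter_not _ _ _,
    by rw [Finset.union_comm, Finset.filter_union_filter_not_eq],
    (Finset.disjoint_filter_filter_not _ _ _).symm, fun x hx => ?_, fun x hx => ?_,
    fun x hx => ?_, fun x hx => (Finset.mem_filter.1 hx).2, fun hrank => ?_⟩
  · obtain ⟨hxO, hxx₀⟩ := Finset.mem_filter.1 hx
    rw [← hxx₀]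
    exact h.eq_filter_union_filter hxO
  · obtain ⟨hxO, hxx₀⟩ := Finset.mem_filter.1 hx
    exact h.eq_filter_ne_union_filter hx₀ hxO hxx₀
  · obtain ⟨hx𝓔, hxO⟩ := Finset.mem_filter.1 hx
    exact (hE x hx𝓔).resolve_right hxO
  · refine ⟨⟨x₀, Finset.mem_filter.2 ⟨hx₀, rfl⟩⟩, fun ⟨hO₁, h𝓔₁⟩ => ?_⟩
    have := finrank_range_le_one_of_forall_eq_or_eq_empty hB x₀ (h.eq_or_eq_empty hO₁ h𝓔₁)
    omega

/-- Main Lemma, abstract form: Under the abstract hypotheses on the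
symmetric linear map `b` on `𝔽₂^E` with partition `E = O ⊔ 𝓔`, there exist partitions
`(O₀, O₁)` of `O` and `(𝓔₀, 𝓔₁)` of `𝓔` describing all values of `b`; moreover if
`dim Im(b) = 2`, then `O₀ ≠ ∅` and at most one of `O₁`, `𝓔₁` is empty. -/
theorem main_lemma
    {E : Type*} [Fintype E] [DecidableEq E]
    (O 𝓔 : Finset E) (hpart : O ∪ 𝓔 = Finset.univ) (hdisj : Disjoint O 𝓔)
    (b : (E → ZMod 2) →ₗ[ZMod 2] (E → ZMod 2))
    (B : E → Finset E)
    (hB : ∀ x y : E, y ∈ B x ↔ b (Pi.single x 1) y = 1)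
    (hsym : ∀ x y : E, y ∈ B x ↔ x ∈ B y)
    (hself : ∀ x : E, x ∈ B x ↔ x ∈ O)
    (hsep : ∀ x ∈ 𝓔, ∀ y ∈ O, B x ≠ B y)
    (hE : ∀ x ∈ 𝓔, B x = ∅ ∨ B x = O)
    (hdim : Module.finrank (ZMod 2) (LinearMap.range b) ≤ 2)
    (hO : 1 ≤ Module.finrank (ZMod 2) (LinearMap.range b) → O.Nonempty) :
    ∃ O₀ O₁ 𝓔₀ 𝓔₁ : Finset E,
      O₀ ∪ O₁ = O ∧ Disjoint O₀ O₁ ∧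
      𝓔₀ ∪ 𝓔₁ = 𝓔 ∧ Disjoint 𝓔₀ 𝓔₁ ∧
      (∀ x ∈ O₀, B x = O₀ ∪ 𝓔₁) ∧
      (∀ x ∈ O₁, B x = O₁ ∪ 𝓔₁) ∧
      (∀ x ∈ 𝓔₀, B x = ∅) ∧
      (∀ x ∈ 𝓔₁, B x = O) ∧
      (Module.finrank (ZMod 2) (LinearMap.range b) = 2 →
        O₀.Nonempty ∧ ¬(O₁ = ∅ ∧ 𝓔₁ = ∅)) :=
  main_lemma_general O 𝓔 hpart b B hB hsym hself hE hdim hO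
end
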